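/- Let S = {(0,0),(0,1),(0,2),(1,0),(1,1),(1,2),(2,0),(2,1)} index the degree-2 approximate Euclidean order basis on the reference quadrilateral. Let M be the diagonal real S×S matrix with M_{(v,w),(v,w)} = 4/((2v+1)(2w+1)). For real parameters q0, q1, let Q be the symmetric S×S matrix whose only nonzero entries (listing one entry of each symmetric pair) are Q_{(0,1),(2,1)} = −3·q1, Q_{(0,2),(2,0)} = 9·q1, Q_{(1,0),(1,2)} = −3·q1, Q_{(1,1),(1,1)} = q1, Q_{(1,2),(1,2)} = q0, and Q_{(2,1),(2,1)} = q0. Then M + Q is positive definite if and only if 60·q0 − 405·q1² + 16 > 0 and 2025·q1² < 16. -/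

import Mathlib

/-- The index set of the degree-2 approximate Euclidean order basis:
modes `(v,w)` with `0 ≤ v,w ≤ 2` excluding `(2,2)`. -/
def AE2 : Type := {p : Fin 3 × Fin 3 // p ≠ (2, 2)}

instance : Fintype AE2 := Subtype.fintype _
instance : DecidableEq AE2 := Subtype.instDecidableEq

/-- Modal mass matrix of the degree-2 approximate Euclidean order Legendre basis:
`M_{(v,w),(v,w)} = 4/((2v+1)(2w+1))`. -/
noncomputable def massAE2 : Matrix AE2 AE2 ℝ :=
  Matrix.diagonal fun p =>
    (4 : ℝ) / (((2 * (p.val.1 : ℕ) + 1) * (2 * (p.val.2 : ℕ) + 1) : ℕ) : ℝ)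

/-- The symmetric filter matrix `Q(q0, q1)` for the degree-2 approximate Euclidean
order basis. -/
def filterAE2 (q0 q1 : ℝ) : Matrix AE2 AE2 ℝ :=
  fun i j =>
    if (i.val = (0, 1) ∧ j.val = (2, 1)) ∨ (i.val = (2, 1) ∧ j.val = (0, 1)) ∨
       (i.val = (1, 0) ∧ j.val = (1, 2)) ∨ (i.val = (1, 2) ∧ j.val = (1, 0)) then -3 * q1
    else if (i.val = (0, 2) ∧ j.val = (2, 0)) ∨ (i.val = (2, 0) ∧ j.val = (0, 2)) then 9 * q1
    else if i.val = (1, 1) ∧ j.val = (1, 1) then q1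
    else if (i.val = (1, 2) ∧ j.val = (1, 2)) ∨ (i.val = (2, 1) ∧ j.val = (2, 1)) then q0
    else 0

/-!
The quadratic form of `M + Q` splits over the coordinate blocks `{(0,0)}`, `{(1,1)}`,
`{(0,1),(2,1)}`, `{(1,0),(1,2)}` and `{(0,2),(2,0)}`, so `M + Q` is positive definite iff every
block is. A symmetric `2 × 2` block `!![α, β; β, γ]` is positive definite iff `α > 0` and
`αγ > β²`; for the blocks `!![4/3, -3q1; -3q1, 4/15 + q0]` and `!![4/5, 9q1; 9q1, 4/5]` these
determinant conditions are the two stated inequalities divided by `45` and `25`, and the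
`1 × 1` block `4/9 + q1 > 0` follows from `|q1| < 4/45`.
-/

def binaryForm (α β γ x y : ℝ) : ℝ := α * x ^ 2 + 2 * β * x * y + γ * y ^ 2

theorem binaryForm_neg_snd_fst (α β γ : ℝ) :
    binaryForm α β γ (-β) α = α * (α * γ - β ^ 2) := by
  unfold binaryForm; ring

theorem binaryForm_pos {α β γ x y : ℝ} (hα : 0 < α) (hdet : β ^ 2 < α * γ)
    (hxy : x ≠ 0 ∨ y ≠ 0) : 0 < binaryForm α β γ x y := by
  have hsq : α * binaryForm α β γ x y = (α * x + β * y) ^ 2 + (α * γ - β ^ 2) * y ^ 2 := by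
    unfold binaryForm; ring
  refine pos_of_mul_pos_right ?_ hα.le
  rw [hsq]
  rcases eq_or_ne y 0 with rfl | hy
  · have hx : x ≠ 0 := by simpa using hxy
    simpa using pow_two_pos_of_ne_zero (mul_ne_zero hα.ne' hx)
  · have := sub_pos.mpr hdet
    positivity

theorem binaryForm_pos_iff {α β γ : ℝ} :
    (∀ x y, x ≠ 0 ∨ y ≠ 0 → 0 < binaryForm α β γ x y) ↔ 0 < α ∧ β ^ 2 < α * γ := by
  refine ⟨fun h => ?_, fun ⟨hα, hdet⟩ _ _ => binaryForm_pos hα hdet⟩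
  have hα : 0 < α := by simpa [binaryForm] using h 1 0 (Or.inl one_ne_zero)
  have hdet := h (-β) α (Or.inr hα.ne')
  rw [binaryForm_neg_snd_fst] at hdet
  exact ⟨hα, by nlinarith⟩

section ForallPos

variable {α β γ : ℝ} (h : ∀ x y, x ≠ 0 ∨ y ≠ 0 → 0 < binaryForm α β γ x y)
include h

theorem eq_zero_of_binaryForm_nonpos {x y : ℝ} (hxy : binaryForm α β γ x y ≤ 0) :
    x = 0 ∧ y = 0 := by
  by_contra hne
  exact (h x y (not_and_or.mp hne)).not_ge hxy

theorem binaryForm_nonneg (x y : ℝ) : 0 ≤ binaryForm α β γ x y := by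
  by_contra! hneg
  obtain ⟨rfl, rfl⟩ := eq_zero_of_binaryForm_nonpos h hneg.le
  simp [binaryForm] at hneg

end ForallPos

theorem single_add_single_ne_zero {ι M : Type*} [DecidableEq ι] [AddMonoid M] {i j : ι}
    (hij : i ≠ j) {x y : M} (hxy : x ≠ 0 ∨ y ≠ 0) :
    (Pi.single i x + Pi.single j y : ι → M) ≠ 0 := by
  intro h
  rcases hxy with hx | hy
  · exact hx (by simpa [hij] using congrFun h i)
  · exact hy (by simpa [hij.symm] using congrFun h j)

namespace AE2

def e00 : AE2 := ⟨(0, 0), by decide⟩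
def e01 : AE2 := ⟨(0, 1), by decide⟩
def e02 : AE2 := ⟨(0, 2), by decide⟩
def e10 : AE2 := ⟨(1, 0), by decide⟩
def e11 : AE2 := ⟨(1, 1), by decide⟩
def e12 : AE2 := ⟨(1, 2), by decide⟩
def e20 : AE2 := ⟨(2, 0), by decide⟩
def e21 : AE2 := ⟨(2, 1), by decide⟩

theorem univ_eq : (Finset.univ : Finset AE2) = {e00, e01, e02, e10, e11, e12, e20, e21} := by
  decide

theorem sum_eq (f : AE2 → ℝ) :
    ∑ i, f i = f e00 + f e01 + f e02 + f e10 + f e11 + f e12 + f e20 + f e21 := by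
  rw [univ_eq, Finset.sum_insert (by decide), Finset.sum_insert (by decide),
    Finset.sum_insert (by decide), Finset.sum_insert (by decide), Finset.sum_insert (by decide),
    Finset.sum_insert (by decide), Finset.sum_insert (by decide), Finset.sum_singleton]
  ring

theorem eq_zero_of_coords {x : AE2 → ℝ} (h00 : x e00 = 0) (h01 : x e01 = 0) (h02 : x e02 = 0)
    (h10 : x e10 = 0) (h11 : x e11 = 0) (h12 : x e12 = 0) (h20 : x e20 = 0) (h21 : x e21 = 0) :
    x = 0 := by
  funext ⟨⟨v, w⟩, hvw⟩
  fin_cases v <;> fin_cases w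
  exacts [h00, h01, h02, h10, h11, h12, h20, h21, absurd rfl hvw]

end AE2

open AE2 Matrix

theorem isHermitian_filterAE2 (q0 q1 : ℝ) : (filterAE2 q0 q1).IsHermitian := by
  ext i j
  fin_cases i <;> fin_cases j <;> rfl

theorem dotProduct_massAE2_add_filterAE2_mulVec (q0 q1 : ℝ) (x : AE2 → ℝ) :
    star x ⬝ᵥ (massAE2 + filterAE2 q0 q1) *ᵥ x =
      4 * x e00 ^ 2 + (4 / 9 + q1) * x e11 ^ 2
        + binaryForm (4 / 3) (-3 * q1) (4 / 15 + q0) (x e01) (x e21)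
        + binaryForm (4 / 3) (-3 * q1) (4 / 15 + q0) (x e10) (x e12)
        + binaryForm (4 / 5) (9 * q1) (4 / 5) (x e02) (x e20) := by
  simp only [star_trivial, dotProduct, Matrix.mulVec, sum_eq, Matrix.add_apply, massAE2,
    filterAE2, Matrix.diagonal_apply, binaryForm]
  norm_num (config := { decide := true }) [e00, e01, e02, e10, e11, e12, e20, e21]
  ring

theorem isHermitian_massAE2_add_filterAE2 (q0 q1 : ℝ) :
    (massAE2 + filterAE2 q0 q1).IsHermitian :=
  (isHermitian_diagonal _).add (isHermitian_filterAE2 q0 q1)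

theorem posDef_massAE2_add_filterAE2_iff (q0 q1 : ℝ) :
    (massAE2 + filterAE2 q0 q1).PosDef ↔
      0 < 4 / 9 + q1 ∧
      (∀ x y, x ≠ 0 ∨ y ≠ 0 → 0 < binaryForm (4 / 3) (-3 * q1) (4 / 15 + q0) x y) ∧
      (∀ x y, x ≠ 0 ∨ y ≠ 0 → 0 < binaryForm (4 / 5) (9 * q1) (4 / 5) x y) := by
  simp only [posDef_iff_dotProduct_mulVec, isHermitian_massAE2_add_filterAE2, true_and,
    dotProduct_massAE2_add_filterAE2_mulVec]
  constructor
  · intro h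
    refine ⟨?_, fun x y hxy => ?_, fun x y hxy => ?_⟩
    · simpa (config := { decide := true }) [Pi.single_apply, binaryForm]
        using h (x := Pi.single e11 1) (by simp)
    · simpa (config := { decide := true }) [Pi.single_apply, binaryForm]
        using h (single_add_single_ne_zero (i := e01) (j := e21) (by decide) hxy)
    · simpa (config := { decide := true }) [Pi.single_apply, binaryForm]
        using h (single_add_single_ne_zero (i := e02) (j := e20) (by decide) hxy)
  · rintro ⟨h₁₁, hB₁, hB₂⟩ x hx
    by_contra! hle
    have := binaryForm_nonneg hB₁ (x e01) (x e21)
    have := binaryForm_nonneg hB₁ (x e10) (x e12)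
    have := binaryForm_nonneg hB₂ (x e02) (x e20)
    have := mul_nonneg h₁₁.le (sq_nonneg (x e11))
    have := sq_nonneg (x e00)
    obtain ⟨h01, h21⟩ :=
      eq_zero_of_binaryForm_nonpos hB₁ (x := x e01) (y := x e21) (by linarith)
    obtain ⟨h10, h12⟩ :=
      eq_zero_of_binaryForm_nonpos hB₁ (x := x e10) (y := x e12) (by linarith)
    obtain ⟨h02, h20⟩ :=
      eq_zero_of_binaryForm_nonpos hB₂ (x := x e02) (y := x e20) (by linarith)
    have h00 : x e00 = 0 := pow_eq_zero_iff two_ne_zero |>.mp (by linarith)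
    have h11 : x e11 = 0 := pow_eq_zero_iff two_ne_zero |>.mp <|
      (mul_eq_zero.mp (by linarith)).resolve_left h₁₁.ne'
    exact hx (eq_zero_of_coords h00 h01 h02 h10 h11 h12 h20 h21)

/-- For the degree-2 approximate Euclidean order basis, `M + Q` is positive definite iff
`60 q0 - 405 q1² + 16 > 0` and `2025 q1² < 16`. -/
theorem stmt_5 (q0 q1 : ℝ) :
    (massAE2 + filterAE2 q0 q1).PosDef ↔
      60 * q0 - 405 * q1 ^ 2 + 16 > 0 ∧ 2025 * q1 ^ 2 < 16 := by
  rw [posDef_massAE2_add_filterAE2_iff, binaryForm_pos_iff, binaryForm_pos_iff]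
  constructor
  · rintro ⟨-, ⟨-, h₁⟩, -, h₂⟩
    constructor <;> nlinarith
  · rintro ⟨hD, hE⟩
    exact ⟨by nlinarith, ⟨by norm_num, by nlinarith⟩, by norm_num, by nlinarith⟩
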